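/- The cardinality of NC_s(2n) equals the cardinality of NC(n), namely the Catalan number C_n = (1/(n+1))·binom(2n,n). -/

import Mathlib

open scoped Classical


/-- Two blocks `B`, `C` cross: there are `i < k < p < q` with `i, p ∈ B` and `k, q ∈ C`. -/
def Crosses {n : ℕ} (B C : Finset (Fin n)) : Prop :=
  ∃ i k p q : Fin n, i < k ∧ k < p ∧ p < q ∧ i ∈ B ∧ p ∈ B ∧ k ∈ C ∧ q ∈ C

/-- `π` is a non-crossing linked partition of `{1, …, n}` (encoded as `Fin n`):
its (nonempty) blocks cover `Fin n`, are pairwise non-crossing, any two distinct blocks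
intersect in at most one element, and if two distinct blocks intersect in `{j}` then both
blocks have at least two elements and `j` is the minimal element of exactly one of them. -/
def IsNCL (n : ℕ) (π : Finset (Finset (Fin n))) : Prop :=
  (∀ B ∈ π, B.Nonempty) ∧
  (∀ x : Fin n, ∃ B ∈ π, x ∈ B) ∧
  (∀ B ∈ π, ∀ C ∈ π, B ≠ C → ¬ Crosses B C) ∧
  (∀ B ∈ π, ∀ C ∈ π, B ≠ C → (B ∩ C).card ≤ 1 ∧
    ∀ j : Fin n, B ∩ C = {j} →
      2 ≤ B.card ∧ 2 ≤ C.card ∧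
        Xor' (B.min = (j : WithBot (Fin n))) (C.min = (j : WithBot (Fin n))))

/-- `π` is a non-crossing partition: a non-crossing linked partition with pairwise
disjoint blocks. -/
def IsNC (n : ℕ) (π : Finset (Finset (Fin n))) : Prop :=
  IsNCL n π ∧ ∀ B ∈ π, ∀ C ∈ π, B ≠ C → Disjoint B C

/-- `Refines n σ π` (i.e. `σ ⪯ π`): every block of `π` is a union of blocks of `σ`. -/
def Refines (n : ℕ) (σ π : Finset (Finset (Fin n))) : Prop :=
  ∀ B ∈ π, ∃ S : Finset (Finset (Fin n)), S ⊆ σ ∧ B = S.sup id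

/-- `a` and `b` lie in a common block of `π`. -/
def Linked {n : ℕ} (π : Finset (Finset (Fin n))) (a b : Fin n) : Prop :=
  ∃ B ∈ π, a ∈ B ∧ b ∈ B

/-- `a` and `b` are connected in `π`: joined by a chain of pairwise intersecting blocks. -/
def Connected {n : ℕ} (π : Finset (Finset (Fin n))) (a b : Fin n) : Prop :=
  Relation.ReflTransGen (Linked π) a b

/-- The partition `c(π)` of `Fin n` into the connected components of `π`. -/
noncomputable def cPart (n : ℕ) (π : Finset (Finset (Fin n))) : Finset (Finset (Fin n)) :=
  Finset.univ.image fun i => Finset.univ.filter (Connected π i)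

/-- Embedding of the unbarred copy: `i ↦ 2 i` in the interleaved order
`1, 1̄, 2, 2̄, …, n, n̄`. -/
def ueEmb (n : ℕ) (i : Fin n) : Fin (2 * n) := ⟨2 * i.1, by have := i.isLt; omega⟩

/-- Embedding of the barred copy: `i ↦ 2 i + 1` in the interleaved order. -/
def beEmb (n : ℕ) (i : Fin n) : Fin (2 * n) := ⟨2 * i.1 + 1, by have := i.isLt; omega⟩

/-- The union `γ ∪ γ'` inside the interleaved ordered set `1, 1̄, 2, 2̄, …, n, n̄`. -/
def interleave (n : ℕ) (γ γ' : Finset (Finset (Fin n))) : Finset (Finset (Fin (2 * n))) :=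
  γ.image (Finset.image (ueEmb n)) ∪ γ'.image (Finset.image (beEmb n))

/-- `γ'` is the Kreweras complement of `γ`: the largest non-crossing partition (in the
refinement order) such that `γ ∪ γ'` is non-crossing in the interleaved order. -/
def IsKr (n : ℕ) (γ γ' : Finset (Finset (Fin n))) : Prop :=
  IsNC n γ' ∧ IsNC (2 * n) (interleave n γ γ') ∧
  ∀ τ, IsNC n τ → IsNC (2 * n) (interleave n γ τ) → Refines n τ γ'

/-- `B` is an exterior block of `γ`: no other block `D` of `γ` contains elements `l, s`
with `l = min B`, or `l < min B` and `max B < s`. -/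
def IsExteriorIn (n : ℕ) (γ : Finset (Finset (Fin n))) (B : Finset (Fin n)) : Prop :=
  B ∈ γ ∧ ∀ D ∈ γ, D ≠ B → ∀ l ∈ D, ∀ s ∈ D,
    ¬((l ∈ B ∧ ∀ b ∈ B, l ≤ b) ∨ (∀ b ∈ B, l < b ∧ b < s))

/-- Halving map `Fin (2n) → Fin n`. -/
def halfEmb (n : ℕ) (i : Fin (2 * n)) : Fin n := ⟨i.1 / 2, by have := i.isLt; omega⟩

/-- `γ₋`: the restriction of `γ ∈ NC(2n)` to the odd elements `{1, 3, …, 2n − 1}`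
(indices `≡ 0 mod 2` in the `0`-based encoding), identified with a partition of `Fin n`. -/
noncomputable def minusPart (n : ℕ) (γ : Finset (Finset (Fin (2 * n)))) :
    Finset (Finset (Fin n)) :=
  (γ.filter fun B => ∀ i ∈ B, i.1 % 2 = 0).image (Finset.image (halfEmb n))

/-- `γ₊`: the restriction of `γ ∈ NC(2n)` to the even elements `{2, 4, …, 2n}`,
identified with a partition of `Fin n`. -/
noncomputable def plusPart (n : ℕ) (γ : Finset (Finset (Fin (2 * n)))) :
    Finset (Finset (Fin n)) :=
  (γ.filter fun B => ∀ i ∈ B, i.1 % 2 = 1).image (Finset.image (halfEmb n))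

/-- `γ ∈ NC_s(2n)`: a non-crossing partition of `{1, …, 2n}` all of whose blocks have
elements of constant parity, with `γ₊ = Kr(γ₋)`. -/
def NCs (n : ℕ) (γ : Finset (Finset (Fin (2 * n)))) : Prop :=
  IsNC (2 * n) γ ∧
  (∀ B ∈ γ, (∀ i ∈ B, i.1 % 2 = 0) ∨ (∀ i ∈ B, i.1 % 2 = 1)) ∧
  IsKr n (minusPart n γ) (plusPart n γ)

/-- The restriction of `γ` to a subset `S`. -/
noncomputable def restrictTo (n : ℕ) (γ : Finset (Finset (Fin n))) (S : Finset (Fin n)) :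
    Finset (Finset (Fin n)) :=
  (γ.image fun B => B ∩ S).filter Finset.Nonempty

/-- A planar rooted tree: a root together with a linearly ordered (left to right) list of
subtrees. -/
inductive PTree where
  | node : List PTree → PTree

mutual
/-- Number of vertices of a planar rooted tree. -/
def PTree.size : PTree → ℕ
  | .node ts => 1 + sizeList ts
def sizeList : List PTree → ℕ
  | [] => 0
  | t :: ts => PTree.size t + sizeList ts
end

/-- Depth-first indices of the roots of a list of trees, the first root getting index `k`. -/
def childRoots : List PTree → ℕ → List ℕ
  | [], _ => []
  | t :: ts, k => k :: childRoots ts (k + PTree.size t)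

mutual
/-- The blocks of the constituent elementary trees (a root together with its offsprings,
provided there is at least one offspring) of a planar tree, with vertices numbered in
depth-first (left-first) order starting at `k`. -/
def PTree.blk : PTree → ℕ → List (List ℕ)
  | .node ts, k =>
      (if ts.isEmpty then [] else [k :: childRoots ts (k + 1)]) ++ blkList ts (k + 1)
def blkList : List PTree → ℕ → List (List ℕ)
  | [], _ => []
  | t :: ts, k => PTree.blk t k ++ blkList ts (k + PTree.size t)
end

/-- The blocks of the elementary trees constituting a planar tree, in depth-first
numbering starting at `0`; a single vertex is itself an elementary tree. -/
def treeBlocks : PTree → List (List ℕ)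
  | .node [] => [[0]]
  | t => t.blk 0

/-- Convert a list of (`0`-based) vertex numbers into a block of `Fin n`. -/
def listToBlock (n : ℕ) (l : List ℕ) : Finset (Fin n) :=
  (l.filterMap fun i => if h : i < n then some (⟨i, h⟩ : Fin n) else none).toFinset

mutual
/-- Evaluation of a planar rooted tree: the product over its vertices of `f k`, where `k`
is the number of offsprings of the vertex (so an elementary tree with `m` vertices
contributes `f (m − 1)`). -/
def PTree.eval (f : ℕ → ℂ) : PTree → ℂ
  | .node ts => f ts.length * evalList f ts
def evalList (f : ℕ → ℂ) : List PTree → ℂ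
  | [] => 1
  | t :: ts => PTree.eval f t * evalList f ts
end

/-- A bicolor planar rooted tree: each subtree carries a color (`true` = color 1,
`false` = color 0). -/
inductive BTree where
  | node : List (Bool × BTree) → BTree

mutual
/-- Number of vertices of a bicolor planar tree. -/
def BTree.size : BTree → ℕ
  | .node ts => 1 + bsizeList ts
def bsizeList : List (Bool × BTree) → ℕ
  | [] => 0
  | (_, t) :: ts => BTree.size t + bsizeList ts
end

mutual
/-- Validity of a bicolor planar tree: at every vertex, the offsprings of color 1 precede
the offsprings of color 0. -/
def BTree.Valid : BTree → Prop
  | .node ts => List.Chain' (fun a b => b ≤ a) (ts.map Prod.fst) ∧ bvalidList ts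
def bvalidList : List (Bool × BTree) → Prop
  | [] => True
  | (_, t) :: ts => BTree.Valid t ∧ bvalidList ts
end

/-- A bicolor tree is elementary when all offsprings of the root are leaves. -/
def BTree.IsElementary : BTree → Prop
  | .node ts => ∀ p ∈ ts, p.2 = BTree.node []
/-- The term `t_π[X_1, …, X_n]`: the product over blocks `B = (i_1 < … < i_l)` of `π` of
`t_{l−1}(X_{i_1}, …, X_{i_l})`, times the product over `k ∈ s(π)` (the elements that are
not the minimal element of any block) of `t_0(X_k)`. Here `t m` stands for `t_{m−1}`,
taking `m` arguments. -/
noncomputable def tTerm {A : Type*} [Ring A] (t : ∀ m : ℕ, (Fin m → A) → ℂ)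
    (n : ℕ) (π : Finset (Finset (Fin n))) (X : Fin n → A) : ℂ :=
  (∏ B ∈ π, t B.card fun j => X (B.orderIsoOfFin rfl j).1) *
  ∏ k ∈ Finset.univ.filter
      (fun k : Fin n => ∀ B ∈ π, B.min ≠ (k : WithBot (Fin n))),
    t 1 fun _ => X k

/-- The family `t` satisfies the defining recurrence of the `t`-coefficients:
`φ(X_1 ⋯ X_n) = Σ_{π ∈ NCL(n)} t_π[X_1, …, X_n]`. -/
def TRec {A : Type*} [Ring A] [Algebra ℂ A] (φ : A →ₗ[ℂ] ℂ)
    (t : ∀ m : ℕ, (Fin m → A) → ℂ) : Prop :=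
  ∀ (n : ℕ) (X : Fin (n + 1) → A),
    φ (List.ofFn X).prod =
      ∑ π ∈ Finset.univ.filter (fun π => IsNCL (n + 1) π), tTerm t (n + 1) π X

/-- The term `κ_γ[X_1, …, X_n]`: the product over blocks `B = (i_1 < … < i_l)` of `γ` of
`κ_l(X_{i_1}, …, X_{i_l})`. -/
noncomputable def cumTerm {A : Type*} [Ring A] (κ : ∀ m : ℕ, (Fin m → A) → ℂ)
    (n : ℕ) (γ : Finset (Finset (Fin n))) (X : Fin n → A) : ℂ :=
  ∏ B ∈ γ, κ B.card fun j => X (B.orderIsoOfFin rfl j).1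

/-- The family `κ` satisfies the moment–cumulant recurrence
`φ(X_1 ⋯ X_n) = Σ_{γ ∈ NC(n)} κ_γ[X_1, …, X_n]` defining the free cumulants. -/
def CumRec {A : Type*} [Ring A] [Algebra ℂ A] (φ : A →ₗ[ℂ] ℂ)
    (κ : ∀ m : ℕ, (Fin m → A) → ℂ) : Prop :=
  ∀ (n : ℕ) (X : Fin (n + 1) → A),
    φ (List.ofFn X).prod =
      ∑ γ ∈ Finset.univ.filter (fun γ => IsNC (n + 1) γ), cumTerm κ (n + 1) γ X

/-- Free independence of a family of unital subalgebras: alternating products of centered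
elements have vanishing expectation. -/
def FreeFamily {A : Type*} [Ring A] [Algebra ℂ A] (φ : A →ₗ[ℂ] ℂ) {I : Type*}
    (S : I → Subalgebra ℂ A) : Prop :=
  ∀ (n : ℕ) (a : Fin (n + 1) → A) (idx : Fin (n + 1) → I),
    (∀ k, a k ∈ S (idx k)) → (∀ k, φ (a k) = 0) →
    (∀ k : Fin n, idx k.castSucc ≠ idx k.succ) →
    φ (List.ofFn a).prod = 0

/-- Two elements are free if the unital subalgebras they generate are free. -/
def FreePair {A : Type*} [Ring A] [Algebra ℂ A] (φ : A →ₗ[ℂ] ℂ) (X Y : A) : Prop :=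
  FreeFamily φ fun b : Bool =>
    if b = true then Algebra.adjoin ℂ {X} else Algebra.adjoin ℂ {Y}


/-!
A partition is recovered from its relation `Linked` as the set of classes, and it is
non-crossing iff `i < k < p < q`, `i ~ p`, `k ~ q` force `i ~ k`; all arguments are run on
these relations.

Counting: let `m` be the smallest element of the block of `n` in a non-crossing partition of
`{0, …, n}`. No block can meet both `[0, m)` and `(m, n]`, as it would cross the block of `n`, so
the partition is the same as a non-crossing partition of `[0, m)` together with one of `(m, n]`
into whose last block `m` is put back. This is the Catalan recurrence.

`NC_s(2n)`: let `a ~ b` when the interval `(a, b]` separates no block of `δ`. The interleaving of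
`δ` and `τ` is non-crossing iff `δ` and `τ` are and every block of `τ` lies in a class of `~`;
hence the classes of `~` form the largest admissible `τ`, i.e. `Kr(δ)`, and `γ ↦ γ₋` is a
bijection `NC_s(2n) → NC(n)` with inverse `δ ↦ δ ∪ Kr(δ)`.
-/

section Partition

variable {n : ℕ}

def IsPart (n : ℕ) (π : Finset (Finset (Fin n))) : Prop :=
  (∀ B ∈ π, B.Nonempty) ∧ (∀ x : Fin n, ∃ B ∈ π, x ∈ B) ∧
    ∀ B ∈ π, ∀ C ∈ π, B ≠ C → Disjoint B C

theorem IsPart.eq_of_mem {π : Finset (Finset (Fin n))} (h : IsPart n π)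
    {B C : Finset (Fin n)} {x : Fin n} (hB : B ∈ π) (hC : C ∈ π) (hxB : x ∈ B) (hxC : x ∈ C) :
    B = C :=
  by_contra fun hne => Finset.disjoint_left.mp (h.2.2 B hB C hC hne) hxB hxC

theorem Linked.symm {π : Finset (Finset (Fin n))} {x y : Fin n} (h : Linked π x y) :
    Linked π y x :=
  let ⟨B, hB, hx, hy⟩ := h
  ⟨B, hB, hy, hx⟩

theorem IsPart.linked_equivalence {π : Finset (Finset (Fin n))} (h : IsPart n π) :
    Equivalence (Linked π) where
  refl x := let ⟨B, hB, hx⟩ := h.2.1 x; ⟨B, hB, hx, hx⟩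
  symm := Linked.symm
  trans := fun ⟨B, hB, hx, hy⟩ ⟨_, hC, hy', hz⟩ => ⟨B, hB, hx, h.eq_of_mem hC hB hy' hy ▸ hz⟩

noncomputable def ofRel (n : ℕ) (r : Fin n → Fin n → Prop) : Finset (Finset (Fin n)) :=
  Finset.univ.image fun x => Finset.univ.filter (r x)

variable {r : Fin n → Fin n → Prop}

theorem mem_ofRel {B : Finset (Fin n)} : B ∈ ofRel n r ↔ ∃ x, Finset.univ.filter (r x) = B := by
  simp [ofRel]

theorem isPart_ofRel (hr : Equivalence r) : IsPart n (ofRel n r) := by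
  refine ⟨?_, fun x => ⟨_, mem_ofRel.mpr ⟨x, rfl⟩, by simpa using hr.refl x⟩, ?_⟩
  · rintro B hB
    obtain ⟨x, rfl⟩ := mem_ofRel.mp hB
    exact ⟨x, by simpa using hr.refl x⟩
  · rintro B hB C hC hne
    obtain ⟨x, rfl⟩ := mem_ofRel.mp hB
    obtain ⟨y, rfl⟩ := mem_ofRel.mp hC
    refine Finset.disjoint_left.mpr fun z hxz hyz => hne ?_
    simp only [Finset.mem_filter, Finset.mem_univ, true_and] at hxz hyz
    ext w
    simp only [Finset.mem_filter, Finset.mem_univ, true_and]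
    exact ⟨fun h => hr.trans (hr.trans hyz (hr.symm hxz)) h,
      fun h => hr.trans (hr.trans hxz (hr.symm hyz)) h⟩

theorem linked_ofRel (hr : Equivalence r) {x y : Fin n} : Linked (ofRel n r) x y ↔ r x y := by
  constructor
  · rintro ⟨B, hB, hx, hy⟩
    obtain ⟨z, rfl⟩ := mem_ofRel.mp hB
    simp only [Finset.mem_filter, Finset.mem_univ, true_and] at hx hy
    exact hr.trans (hr.symm hx) hy
  · intro hxy
    exact ⟨_, mem_ofRel.mpr ⟨x, rfl⟩, by simpa using hr.refl x, by simpa using hxy⟩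

theorem IsPart.ofRel_linked {π : Finset (Finset (Fin n))} (h : IsPart n π) :
    ofRel n (Linked π) = π := by
  have hblock : ∀ B ∈ π, ∀ x ∈ B, Finset.univ.filter (Linked π x) = B := by
    intro B hB x hx
    ext y
    simp only [Finset.mem_filter, Finset.mem_univ, true_and]
    exact ⟨fun ⟨C, hC, hxC, hyC⟩ => h.eq_of_mem hC hB hxC hx ▸ hyC, fun hy => ⟨B, hB, hx, hy⟩⟩
  ext B
  rw [mem_ofRel]
  constructor
  · rintro ⟨x, rfl⟩
    obtain ⟨C, hC, hx⟩ := h.2.1 x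
    rwa [hblock C hC x hx]
  · intro hB
    obtain ⟨x, hx⟩ := h.1 B hB
    exact ⟨x, hblock B hB x hx⟩

theorem IsPart.eq_ofRel {π : Finset (Finset (Fin n))} (h : IsPart n π)
    (hr : ∀ x y, Linked π x y ↔ r x y) : π = ofRel n r := by
  rw [← h.ofRel_linked]
  congr
  ext x y
  exact hr x y

theorem IsPart.refines_iff {σ π : Finset (Finset (Fin n))} (hσ : IsPart n σ) (hπ : IsPart n π) :
    Refines n σ π ↔ ∀ x y, Linked σ x y → Linked π x y := by
  constructor
  · rintro h x y ⟨C, hC, hx, hy⟩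
    obtain ⟨B, hB, hxB⟩ := hπ.2.1 x
    obtain ⟨S, hS, rfl⟩ := h B hB
    obtain ⟨C', hC', hxC'⟩ := Finset.mem_sup.mp hxB
    refine ⟨_, hB, hxB, Finset.mem_sup.mpr ⟨C', hC', ?_⟩⟩
    rwa [hσ.eq_of_mem (hS hC') hC hxC' hx]
  · intro h B hB
    refine ⟨σ.filter (· ⊆ B), Finset.filter_subset _ _, le_antisymm (fun x hx => ?_)
      (Finset.sup_le fun C hC => (Finset.mem_filter.mp hC).2)⟩
    obtain ⟨C, hC, hxC⟩ := hσ.2.1 x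
    have hCB : C ⊆ B := fun y hy =>
      let ⟨D, hD, hxD, hyD⟩ := h x y ⟨C, hC, hxC, hy⟩
      hπ.eq_of_mem hD hB hxD hx ▸ hyD
    exact Finset.mem_sup.mpr ⟨C, Finset.mem_filter.mpr ⟨hC, hCB⟩, hxC⟩

theorem IsPart.eq_of_refines {σ π : Finset (Finset (Fin n))} (hσ : IsPart n σ) (hπ : IsPart n π)
    (h₁ : Refines n σ π) (h₂ : Refines n π σ) : σ = π := by
  rw [hπ.eq_ofRel fun x y => ⟨(hπ.refines_iff hσ).mp h₂ x y, (hσ.refines_iff hπ).mp h₁ x y⟩,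
    hσ.ofRel_linked]

noncomputable def comapPart {k : ℕ} (f : Fin k → Fin n) (π : Finset (Finset (Fin n))) :
    Finset (Finset (Fin k)) :=
  ofRel k (Function.onFun (Linked π) f)

end Partition

section Noncrossing

variable {n : ℕ}

def Noncrossing (r : Fin n → Fin n → Prop) : Prop :=
  ∀ ⦃i k p q : Fin n⦄, i < k → k < p → p < q → r i p → r k q → r i k

theorem Noncrossing.comap {k : ℕ} {r : Fin n → Fin n → Prop} (h : Noncrossing r)
    {f : Fin k → Fin n} (hf : StrictMono f) : Noncrossing (Function.onFun r f) :=
  fun _ _ _ _ hik hkp hpq => h (hf hik) (hf hkp) (hf hpq)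

theorem isNC_iff {π : Finset (Finset (Fin n))} :
    IsNC n π ↔ IsPart n π ∧ Noncrossing (Linked π) := by
  constructor
  · rintro ⟨⟨hne, hcov, hcr, -⟩, hdisj⟩
    have hπ : IsPart n π := ⟨hne, hcov, hdisj⟩
    refine ⟨hπ, fun i k p q hik hkp hpq ⟨B, hB, hi, hp⟩ ⟨C, hC, hk, hq⟩ => ?_⟩
    by_cases hBC : B = C
    · exact ⟨B, hB, hi, hBC ▸ hk⟩
    · exact absurd ⟨i, k, p, q, hik, hkp, hpq, hi, hp, hk, hq⟩ (hcr B hB C hC hBC)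
  · rintro ⟨hπ, hnc⟩
    refine ⟨⟨hπ.1, hπ.2.1, ?_, fun B hB C hC hBC => ?_⟩, hπ.2.2⟩
    · rintro B hB C hC hBC ⟨i, k, p, q, hik, hkp, hpq, hi, hp, hk, hq⟩
      obtain ⟨D, hD, hiD, hkD⟩ := hnc hik hkp hpq ⟨B, hB, hi, hp⟩ ⟨C, hC, hk, hq⟩
      exact hBC (hπ.eq_of_mem hB hD hi hiD ▸ hπ.eq_of_mem hD hC hkD hk)
    · have hinter : B ∩ C = ∅ := Finset.disjoint_iff_inter_eq_empty.mp (hπ.2.2 B hB C hC hBC)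
      simp [hinter, eq_comm (a := (∅ : Finset (Fin n)))]

theorem IsNC.isPart {π : Finset (Finset (Fin n))} (h : IsNC n π) : IsPart n π :=
  (isNC_iff.mp h).1

theorem isNC_ofRel {r : Fin n → Fin n → Prop} (hr : Equivalence r) :
    IsNC n (ofRel n r) ↔ Noncrossing r := by
  have hlinked : Linked (ofRel n r) = r := by
    ext x y
    exact linked_ofRel hr
  rw [isNC_iff, hlinked]
  exact and_iff_right (isPart_ofRel hr)

theorem IsNC.comapPart {k : ℕ} {π : Finset (Finset (Fin n))} (h : IsNC n π) {f : Fin k → Fin n}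
    (hf : StrictMono f) : IsNC k (comapPart f π) :=
  (isNC_ofRel (h.isPart.linked_equivalence.comap f)).mpr ((isNC_iff.mp h).2.comap hf)

end Noncrossing

section Glue

variable {n : ℕ} (m : Fin (n + 1))

def lowEmb : Fin m → Fin (n + 1) := Fin.castLE (by omega)

def highEmb : Fin (n - m) → Fin (n + 1) := fun a => ⟨a + m + 1, by omega⟩

variable {m}

@[simp] theorem val_lowEmb (a : Fin m) : (lowEmb m a : ℕ) = a := rfl

@[simp] theorem val_highEmb (a : Fin (n - m)) : (highEmb m a : ℕ) = a + m + 1 := rfl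

theorem lowEmb_strictMono : StrictMono (lowEmb m) := fun _ _ h => h

theorem highEmb_strictMono : StrictMono (highEmb m) := fun _ _ h => by
  rw [Fin.lt_def] at h ⊢
  simp only [val_highEmb]
  omega

theorem lowEmb_lt (a : Fin m) : lowEmb m a < m := a.isLt

theorem lt_highEmb (a : Fin (n - m)) : m < highEmb m a := by
  rw [Fin.lt_def, val_highEmb]
  omega

theorem exists_lowEmb_eq {x : Fin (n + 1)} (hx : x < m) : ∃ a, lowEmb m a = x :=
  ⟨⟨x, hx⟩, rfl⟩

theorem exists_highEmb_eq {x : Fin (n + 1)} (hx : m < x) : ∃ a, highEmb m a = x :=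
  ⟨⟨x - m - 1, by omega⟩, Fin.ext (by simp only [val_highEmb]; omega)⟩

theorem exists_lowEmb_or_eq_or_exists_highEmb (x : Fin (n + 1)) :
    (∃ a, lowEmb m a = x) ∨ x = m ∨ ∃ a, highEmb m a = x := by
  rcases lt_trichotomy x m with h | h | h
  exacts [.inl (exists_lowEmb_eq h), .inr (.inl h), .inr (.inr (exists_highEmb_eq h))]

@[simp] theorem lowEmb_inj {a b : Fin m} : lowEmb m a = lowEmb m b ↔ a = b :=
  lowEmb_strictMono.injective.eq_iff

@[simp] theorem highEmb_inj {a b : Fin (n - m)} : highEmb m a = highEmb m b ↔ a = b :=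
  highEmb_strictMono.injective.eq_iff

@[simp] theorem lowEmb_ne_highEmb (a : Fin m) (b : Fin (n - m)) : lowEmb m a ≠ highEmb m b :=
  fun h => by have := congrArg Fin.val h; simp only [val_lowEmb, val_highEmb] at this; omega

@[simp] theorem highEmb_ne_lowEmb (a : Fin (n - m)) (b : Fin m) : highEmb m a ≠ lowEmb m b :=
  (lowEmb_ne_highEmb b a).symm

@[simp] theorem lowEmb_ne (a : Fin m) : lowEmb m a ≠ m :=
  fun h => by have := congrArg Fin.val h; simp only [val_lowEmb] at this; omega

@[simp] theorem highEmb_ne (a : Fin (n - m)) : highEmb m a ≠ m :=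
  fun h => by have := congrArg Fin.val h; simp only [val_highEmb] at this; omega

@[simp] theorem lowEmb_ne_last (a : Fin m) : lowEmb m a ≠ Fin.last n :=
  fun h => by have := congrArg Fin.val h; simp only [val_lowEmb, Fin.val_last] at this; omega

variable (m)

def GlueTop (r₂ : Fin (n - m) → Fin (n - m) → Prop) (z : Fin (n + 1)) : Prop :=
  z = m ∨ ∃ a t, highEmb m a = z ∧ highEmb m t = Fin.last n ∧ r₂ a t

/-- Glues `r₁` on `[0, m)` and `r₂` on `(m, n]`, putting `m` into the class of `n`. -/
def GlueRel (r₁ : Fin m → Fin m → Prop) (r₂ : Fin (n - m) → Fin (n - m) → Prop)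
    (x y : Fin (n + 1)) : Prop :=
  (∃ a b, lowEmb m a = x ∧ lowEmb m b = y ∧ r₁ a b) ∨
    (∃ a b, highEmb m a = x ∧ highEmb m b = y ∧ r₂ a b) ∨ (GlueTop m r₂ x ∧ GlueTop m r₂ y)

variable {m} {r₁ : Fin m → Fin m → Prop} {r₂ : Fin (n - m) → Fin (n - m) → Prop}

@[simp] theorem glueTop_self : GlueTop m r₂ m := .inl rfl

@[simp] theorem not_glueTop_lowEmb (a : Fin m) : ¬ GlueTop m r₂ (lowEmb m a) := by
  simp [GlueTop]

@[simp] theorem glueTop_highEmb (a : Fin (n - m)) :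
    GlueTop m r₂ (highEmb m a) ↔ ∃ t, highEmb m t = Fin.last n ∧ r₂ a t := by
  simp [GlueTop]

@[simp] theorem glueRel_lowEmb_left (a : Fin m) (y : Fin (n + 1)) :
    GlueRel m r₁ r₂ (lowEmb m a) y ↔ ∃ b, lowEmb m b = y ∧ r₁ a b := by
  simp [GlueRel]

@[simp] theorem glueRel_lowEmb_right (x : Fin (n + 1)) (b : Fin m) :
    GlueRel m r₁ r₂ x (lowEmb m b) ↔ ∃ a, lowEmb m a = x ∧ r₁ a b := by
  simp [GlueRel]

theorem glueRel_highEmb_highEmb (h₂ : Equivalence r₂) (a b : Fin (n - m)) :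
    GlueRel m r₁ r₂ (highEmb m a) (highEmb m b) ↔ r₂ a b := by
  simp only [GlueRel, glueTop_highEmb, lowEmb_ne_highEmb, highEmb_inj]
  refine ⟨?_, fun h => .inr (.inl ⟨a, b, rfl, rfl, h⟩)⟩
  rintro (⟨_, _, h, -⟩ | ⟨_, _, rfl, rfl, h⟩ | ⟨⟨t, ht, hat⟩, ⟨s, hs, hbs⟩⟩)
  · exact h.elim
  · exact h
  · obtain rfl : s = t := highEmb_inj.mp (hs.trans ht.symm)
    exact h₂.trans hat (h₂.symm hbs)

@[simp] theorem glueRel_self_left (y : Fin (n + 1)) : GlueRel m r₁ r₂ m y ↔ GlueTop m r₂ y := by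
  simp [GlueRel]

@[simp] theorem glueRel_self_right (x : Fin (n + 1)) : GlueRel m r₁ r₂ x m ↔ GlueTop m r₂ x := by
  simp [GlueRel]

theorem GlueTop.of_rel (h₂ : Equivalence r₂) {a b : Fin (n - m)} (hab : r₂ a b)
    (hb : GlueTop m r₂ (highEmb m b)) : GlueTop m r₂ (highEmb m a) := by
  obtain ⟨t, ht, hbt⟩ := (glueTop_highEmb b).mp hb
  exact (glueTop_highEmb a).mpr ⟨t, ht, h₂.trans hab hbt⟩

theorem glueRel_highEmb_left (h₂ : Equivalence r₂) (a : Fin (n - m)) (y : Fin (n + 1)) :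
    GlueRel m r₁ r₂ (highEmb m a) y ↔
      (∃ b, highEmb m b = y ∧ r₂ a b) ∨ (y = m ∧ GlueTop m r₂ (highEmb m a)) := by
  rcases exists_lowEmb_or_eq_or_exists_highEmb (m := m) y with ⟨b, rfl⟩ | rfl | ⟨b, rfl⟩
  · simp
  · simp
  · simp [glueRel_highEmb_highEmb h₂]

theorem glueRel_highEmb_right (h₂ : Equivalence r₂) (x : Fin (n + 1)) (b : Fin (n - m)) :
    GlueRel m r₁ r₂ x (highEmb m b) ↔
      (∃ a, highEmb m a = x ∧ r₂ a b) ∨ (x = m ∧ GlueTop m r₂ (highEmb m b)) := by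
  rcases exists_lowEmb_or_eq_or_exists_highEmb (m := m) x with ⟨a, rfl⟩ | rfl | ⟨a, rfl⟩
  · simp
  · simp
  · simp [glueRel_highEmb_highEmb h₂]

theorem glueRel_equivalence (h₁ : Equivalence r₁) (h₂ : Equivalence r₂) :
    Equivalence (GlueRel m r₁ r₂) where
  refl x := by
    rcases exists_lowEmb_or_eq_or_exists_highEmb (m := m) x with ⟨a, rfl⟩ | rfl | ⟨a, rfl⟩
    · simpa using h₁.refl a
    · simp
    · exact (glueRel_highEmb_highEmb h₂ a a).mpr (h₂.refl a)
  symm {x y} h := by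
    rcases h with ⟨a, b, rfl, rfl, h⟩ | ⟨a, b, rfl, rfl, h⟩ | ⟨hx, hy⟩
    exacts [.inl ⟨b, a, rfl, rfl, h₁.symm h⟩, .inr (.inl ⟨b, a, rfl, rfl, h₂.symm h⟩),
      .inr (.inr ⟨hy, hx⟩)]
  trans {x y z} hxy hyz := by
    rcases exists_lowEmb_or_eq_or_exists_highEmb (m := m) y with ⟨b, rfl⟩ | rfl | ⟨b, rfl⟩
    · simp only [glueRel_lowEmb_left, glueRel_lowEmb_right] at hxy hyz
      obtain ⟨a, rfl, hab⟩ := hxy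
      obtain ⟨c, rfl, hbc⟩ := hyz
      simpa using h₁.trans hab hbc
    · simp only [glueRel_self_left, glueRel_self_right] at hxy hyz
      exact .inr (.inr ⟨hxy, hyz⟩)
    · rw [glueRel_highEmb_right h₂] at hxy
      rw [glueRel_highEmb_left h₂] at hyz
      rcases hxy with ⟨a, rfl, hab⟩ | ⟨rfl, hb⟩ <;> rcases hyz with ⟨c, rfl, hbc⟩ | ⟨rfl, hb'⟩
      · exact (glueRel_highEmb_highEmb h₂ a c).mpr (h₂.trans hab hbc)
      · exact (glueRel_self_right _).mpr (hb'.of_rel h₂ hab)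
      · exact (glueRel_self_left _).mpr (hb.of_rel h₂ (h₂.symm hbc))
      · exact (glueRel_self_left _).mpr glueTop_self

theorem noncrossing_glueRel (h₂ : Equivalence r₂) (hr₁ : Noncrossing r₁) (hr₂ : Noncrossing r₂) :
    Noncrossing (GlueRel m r₁ r₂) := by
  intro i k p q hik hkp hpq hip hkq
  rcases exists_lowEmb_or_eq_or_exists_highEmb (m := m) i with ⟨a, rfl⟩ | rfl | ⟨a, rfl⟩
  · obtain ⟨c, rfl, hac⟩ := (glueRel_lowEmb_left _ _).mp hip
    obtain ⟨b, rfl⟩ := exists_lowEmb_eq (hkp.trans (lowEmb_lt c))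
    obtain ⟨d, rfl, hbd⟩ := (glueRel_lowEmb_left _ _).mp hkq
    simp only [lowEmb_strictMono.lt_iff_lt] at hik hkp hpq
    exact (glueRel_lowEmb_left _ _).mpr ⟨b, rfl, hr₁ hik hkp hpq hac hbd⟩
  · obtain ⟨b, rfl⟩ := exists_highEmb_eq hik
    obtain ⟨c, rfl⟩ := exists_highEmb_eq (hik.trans hkp)
    obtain ⟨d, rfl⟩ := exists_highEmb_eq (hik.trans (hkp.trans hpq))
    rw [glueRel_self_left, glueTop_highEmb] at hip ⊢
    rw [glueRel_highEmb_highEmb h₂] at hkq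
    obtain ⟨t, ht, hct⟩ := hip
    refine ⟨t, ht, ?_⟩
    have hdt : d ≤ t := highEmb_strictMono.le_iff_le.mp (ht ▸ Fin.le_last _)
    simp only [highEmb_strictMono.lt_iff_lt] at hkp hpq
    rcases hdt.eq_or_lt with rfl | hdt
    · exact hkq
    · exact h₂.trans (hr₂ hkp hpq hdt hkq hct) hct
  · obtain ⟨b, rfl⟩ := exists_highEmb_eq ((lt_highEmb a).trans hik)
    obtain ⟨c, rfl⟩ := exists_highEmb_eq ((lt_highEmb a).trans (hik.trans hkp))
    obtain ⟨d, rfl⟩ := exists_highEmb_eq ((lt_highEmb a).trans (hik.trans (hkp.trans hpq)))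
    simp only [glueRel_highEmb_highEmb h₂, highEmb_strictMono.lt_iff_lt] at *
    exact hr₂ hik hkp hpq hip hkq

end Glue

abbrev NCPart (n : ℕ) := {γ : Finset (Finset (Fin n)) // IsNC n γ}

section Decomposition

variable {n : ℕ}

noncomputable def lastMin (γ : NCPart (n + 1)) : Fin (n + 1) :=
  (Finset.univ.filter fun x => Linked γ.1 x (Fin.last n)).min'
    ⟨Fin.last n, Finset.mem_filter.mpr ⟨Finset.mem_univ _, γ.2.isPart.linked_equivalence.refl _⟩⟩

theorem lastMin_eq_iff {γ : NCPart (n + 1)} {m : Fin (n + 1)} :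
    lastMin γ = m ↔ Linked γ.1 m (Fin.last n) ∧ ∀ x, Linked γ.1 x (Fin.last n) → m ≤ x := by
  exact (Finset.min'_eq_iff _ _ _).trans (by simp)

theorem lt_lastMin_of_linked {γ : NCPart (n + 1)} {x y : Fin (n + 1)} (hx : x < lastMin γ)
    (hxy : Linked γ.1 x y) : y < lastMin γ := by
  obtain ⟨hm, hmin⟩ := lastMin_eq_iff.mp (rfl : lastMin γ = lastMin γ)
  have hL := γ.2.isPart.linked_equivalence
  suffices ¬ Linked γ.1 y (Fin.last n) by
    by_contra hy
    rcases (not_lt.mp hy).eq_or_lt with hy | hy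
    · exact this (hy ▸ hm)
    rcases (Fin.le_last y).eq_or_lt with hyl | hyl
    · exact this (hyl ▸ hL.refl _)
    exact this (hL.trans (hL.symm hxy)
      (hL.trans ((isNC_iff.mp γ.2).2 hx hy hyl hxy hm) hm))
  exact fun h => (hx.trans_le (hmin x (hL.trans hxy h))).false

noncomputable def gluePart (m : Fin (n + 1)) (σ₁ : Finset (Finset (Fin m)))
    (σ₂ : Finset (Finset (Fin (n - m)))) : Finset (Finset (Fin (n + 1))) :=
  ofRel (n + 1) (GlueRel m (Linked σ₁) (Linked σ₂))

variable {m : Fin (n + 1)} {σ₁ : Finset (Finset (Fin m))} {σ₂ : Finset (Finset (Fin (n - m)))}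

theorem glueRel_linked_equivalence (h₁ : IsPart m σ₁) (h₂ : IsPart (n - m) σ₂) :
    Equivalence (GlueRel m (Linked σ₁) (Linked σ₂)) :=
  glueRel_equivalence h₁.linked_equivalence h₂.linked_equivalence

theorem isNC_gluePart (h₁ : IsNC m σ₁) (h₂ : IsNC (n - m) σ₂) :
    IsNC (n + 1) (gluePart m σ₁ σ₂) :=
  (isNC_ofRel (glueRel_linked_equivalence h₁.isPart h₂.isPart)).mpr
    (noncrossing_glueRel h₂.isPart.linked_equivalence (isNC_iff.mp h₁).2 (isNC_iff.mp h₂).2)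

theorem lastMin_gluePart (h₁ : IsNC m σ₁) (h₂ : IsNC (n - m) σ₂) :
    lastMin ⟨gluePart m σ₁ σ₂, isNC_gluePart h₁ h₂⟩ = m := by
  simp only [lastMin_eq_iff, gluePart,
    linked_ofRel (glueRel_linked_equivalence h₁.isPart h₂.isPart), glueRel_self_left]
  refine ⟨?_, fun x hx => not_lt.mp fun hxm => ?_⟩
  · rcases (Fin.le_last m).eq_or_lt with hm | hm
    · exact hm ▸ glueTop_self
    · obtain ⟨t, ht⟩ := exists_highEmb_eq hm
      exact ht ▸ (glueTop_highEmb t).mpr ⟨t, ht, h₂.isPart.linked_equivalence.refl t⟩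
  · obtain ⟨a, rfl⟩ := exists_lowEmb_eq hxm
    obtain ⟨b, hb, -⟩ := (glueRel_lowEmb_left a _).mp hx
    exact lowEmb_ne_last b hb

theorem comapPart_lowEmb_gluePart (h₁ : IsPart m σ₁) (h₂ : IsPart (n - m) σ₂) :
    comapPart (lowEmb m) (gluePart m σ₁ σ₂) = σ₁ :=
  (h₁.eq_ofRel fun a b => by
    simp [Function.onFun, gluePart, linked_ofRel (glueRel_linked_equivalence h₁ h₂)]).symm

theorem comapPart_highEmb_gluePart (h₁ : IsPart m σ₁) (h₂ : IsPart (n - m) σ₂) :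
    comapPart (highEmb m) (gluePart m σ₁ σ₂) = σ₂ :=
  (h₂.eq_ofRel fun a b => by
    simp [Function.onFun, gluePart, linked_ofRel (glueRel_linked_equivalence h₁ h₂),
      glueRel_highEmb_highEmb h₂.linked_equivalence]).symm

theorem linked_iff_glueRel {γ : NCPart (n + 1)} (x y : Fin (n + 1)) :
    Linked γ.1 x y ↔ GlueRel (lastMin γ)
      (Function.onFun (Linked γ.1) (lowEmb _)) (Function.onFun (Linked γ.1) (highEmb _)) x y := by
  set m := lastMin γ
  have hL := γ.2.isPart.linked_equivalence
  have hcomm : ∀ x y, Linked γ.1 x y ↔ Linked γ.1 y x := fun _ _ => ⟨hL.symm, hL.symm⟩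
  have hlast : Linked γ.1 m (Fin.last n) := (lastMin_eq_iff.mp rfl).1
  have hlow : ∀ (a : Fin m) y, Linked γ.1 (lowEmb m a) y ↔
      ∃ b, lowEmb m b = y ∧ Linked γ.1 (lowEmb m a) (lowEmb m b) := by
    refine fun a y => ⟨fun h => ?_, fun ⟨b, hb, h⟩ => hb ▸ h⟩
    obtain ⟨b, rfl⟩ := exists_lowEmb_eq (lt_lastMin_of_linked (lowEmb_lt a) h)
    exact ⟨b, rfl, h⟩
  have htop : ∀ y, Linked γ.1 m y ↔ GlueTop m (Function.onFun (Linked γ.1) (highEmb m)) y := by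
    intro y
    rcases exists_lowEmb_or_eq_or_exists_highEmb (m := m) y with ⟨b, rfl⟩ | rfl | ⟨b, rfl⟩
    · rw [hcomm, hlow]
      simp
    · simpa using hL.refl _
    · obtain ⟨t, ht⟩ := exists_highEmb_eq ((lt_highEmb b).trans_le (Fin.le_last _))
      rw [glueTop_highEmb]
      refine ⟨fun h => ⟨t, ht, ?_⟩, fun ⟨s, hs, h⟩ => ?_⟩
      · exact hL.trans (hL.symm h) (ht ▸ hlast)
      · exact hL.trans hlast (hL.symm (hs ▸ h))
  rcases exists_lowEmb_or_eq_or_exists_highEmb (m := m) x with ⟨a, rfl⟩ | rfl | ⟨a, rfl⟩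
  · rw [glueRel_lowEmb_left]
    exact hlow a y
  · rw [glueRel_self_left]
    exact htop y
  rcases exists_lowEmb_or_eq_or_exists_highEmb (m := m) y with ⟨b, rfl⟩ | rfl | ⟨b, rfl⟩
  · rw [glueRel_lowEmb_right, hcomm, hlow]
    simp
  · rw [glueRel_self_right, hcomm]
    exact htop _
  · exact (glueRel_highEmb_highEmb (hL.comap _) a b).symm

theorem gluePart_comapPart (γ : NCPart (n + 1)) :
    gluePart (lastMin γ) (comapPart (lowEmb _) γ.1) (comapPart (highEmb _) γ.1) = γ.1 := by
  have hL := γ.2.isPart.linked_equivalence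
  have hlinked : ∀ {k} (f : Fin k → Fin (n + 1)),
      Linked (comapPart f γ.1) = Function.onFun (Linked γ.1) f := fun f => by
    ext a b
    exact linked_ofRel (hL.comap f)
  rw [gluePart, hlinked, hlinked]
  exact (γ.2.isPart.eq_ofRel linked_iff_glueRel).symm

end Decomposition

section Count

variable {n : ℕ}

noncomputable def lastMinFiberEquiv (m : Fin (n + 1)) :
    {γ : NCPart (n + 1) // lastMin γ = m} ≃ NCPart m × NCPart (n - m) where
  toFun γ := (⟨comapPart (lowEmb m) γ.1.1, γ.1.2.comapPart lowEmb_strictMono⟩,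
    ⟨comapPart (highEmb m) γ.1.1, γ.1.2.comapPart highEmb_strictMono⟩)
  invFun σ := ⟨⟨gluePart m σ.1.1 σ.2.1, isNC_gluePart σ.1.2 σ.2.2⟩, lastMin_gluePart σ.1.2 σ.2.2⟩
  left_inv := by
    rintro ⟨γ, rfl⟩
    exact Subtype.ext (Subtype.ext (gluePart_comapPart γ))
  right_inv := by
    rintro ⟨⟨σ₁, h₁⟩, ⟨σ₂, h₂⟩⟩
    exact Prod.ext (Subtype.ext (comapPart_lowEmb_gluePart h₁.isPart h₂.isPart))
      (Subtype.ext (comapPart_highEmb_gluePart h₁.isPart h₂.isPart))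

theorem card_ncPart_zero : Nat.card (NCPart 0) = 1 := by
  have heq : ∀ γ : NCPart 0, γ.1 = ∅ := fun γ =>
    Finset.eq_empty_of_forall_notMem fun B hB => (γ.2.isPart.1 B hB).elim fun x _ => x.elim0
  refine Nat.card_eq_one_iff_unique.mpr ⟨⟨fun γ δ => Subtype.ext ((heq γ).trans (heq δ).symm)⟩,
    ⟨⟨ofRel 0 Eq, (isNC_ofRel eq_equivalence).mpr fun i => i.elim0⟩⟩⟩

theorem card_ncPart (n : ℕ) : Nat.card (NCPart n) = catalan n := by
  induction n using Nat.strong_induction_on with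
  | _ n ih =>
    cases n with
    | zero => rw [card_ncPart_zero, catalan_zero]
    | succ n =>
      rw [← Nat.card_congr (Equiv.sigmaFiberEquiv lastMin), Nat.card_sigma, catalan_succ]
      refine Finset.sum_congr rfl fun m _ => ?_
      rw [Nat.card_congr (lastMinFiberEquiv m), Nat.card_prod, ih m (by omega),
        ih (n - m) (by omega)]

end Count

section Kreweras

variable {n : ℕ}

def KrewerasRel (δ : Finset (Finset (Fin n))) (a b : Fin n) : Prop :=
  ∀ x y, Linked δ x y → (x ∈ Set.uIoc a b ↔ y ∈ Set.uIoc a b)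

variable {δ τ : Finset (Finset (Fin n))}

theorem krewerasRel_equivalence : Equivalence (KrewerasRel δ) where
  refl _ _ _ _ := by simp
  symm h x y hxy := by
    rw [Set.uIoc_comm]
    exact h x y hxy
  trans {a b c} hab hbc x y hxy := by
    have key : ∀ z, z ∈ Set.uIoc a c ↔ (z ∈ Set.uIoc a b ↔ z ∉ Set.uIoc b c) := by
      intro z
      simp only [Set.mem_uIoc]
      omega
    rw [key, key, hab x y hxy, hbc x y hxy]

theorem noncrossing_krewerasRel : Noncrossing (KrewerasRel δ) := by
  intro i k p q hik hkp hpq hip hkq x y hxy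
  have key : ∀ z, z ∈ Set.uIoc i k ↔ z ∈ Set.uIoc i p ∧ z ∉ Set.uIoc k q := by
    intro z
    simp only [Set.mem_uIoc]
    omega
  rw [key, key, hip x y hxy, hkq x y hxy]

variable (n) in
noncomputable def kreweras (δ : Finset (Finset (Fin n))) : Finset (Finset (Fin n)) :=
  ofRel n (KrewerasRel δ)

theorem isNC_kreweras : IsNC n (kreweras n δ) :=
  (isNC_ofRel krewerasRel_equivalence).mpr noncrossing_krewerasRel

theorem linked_kreweras {a b : Fin n} : Linked (kreweras n δ) a b ↔ KrewerasRel δ a b :=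
  linked_ofRel krewerasRel_equivalence

end Kreweras

section Interleave

variable {n : ℕ}

theorem ueEmb_strictMono : StrictMono (ueEmb n) := fun a b h => by
  simp only [Fin.lt_def, ueEmb] at h ⊢
  omega

theorem beEmb_strictMono : StrictMono (beEmb n) := fun a b h => by
  simp only [Fin.lt_def, beEmb] at h ⊢
  omega

@[simp] theorem ueEmb_inj {a b : Fin n} : ueEmb n a = ueEmb n b ↔ a = b :=
  ueEmb_strictMono.injective.eq_iff

@[simp] theorem beEmb_inj {a b : Fin n} : beEmb n a = beEmb n b ↔ a = b :=
  beEmb_strictMono.injective.eq_iff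

@[simp] theorem ueEmb_ne_beEmb (a b : Fin n) : ueEmb n a ≠ beEmb n b := fun h => by
  simp only [ueEmb, beEmb, Fin.ext_iff] at h
  omega

@[simp] theorem beEmb_ne_ueEmb (a b : Fin n) : beEmb n a ≠ ueEmb n b :=
  (ueEmb_ne_beEmb b a).symm

@[simp] theorem ueEmb_lt_beEmb {a b : Fin n} : ueEmb n a < beEmb n b ↔ a ≤ b := by
  simp only [Fin.lt_def, Fin.le_def, ueEmb, beEmb]
  omega

@[simp] theorem beEmb_lt_ueEmb {a b : Fin n} : beEmb n a < ueEmb n b ↔ a < b := by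
  simp only [Fin.lt_def, ueEmb, beEmb]
  omega

@[simp] theorem halfEmb_ueEmb (a : Fin n) : halfEmb n (ueEmb n a) = a :=
  Fin.ext (by simp [halfEmb, ueEmb])

@[simp] theorem halfEmb_beEmb (a : Fin n) : halfEmb n (beEmb n a) = a :=
  Fin.ext (by simp only [halfEmb, beEmb]; omega)

theorem ueEmb_halfEmb {z : Fin (2 * n)} (hz : z.1 % 2 = 0) : ueEmb n (halfEmb n z) = z :=
  Fin.ext (by simp only [halfEmb, ueEmb]; omega)

theorem beEmb_halfEmb {z : Fin (2 * n)} (hz : z.1 % 2 = 1) : beEmb n (halfEmb n z) = z :=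
  Fin.ext (by simp only [halfEmb, beEmb]; omega)

theorem mem_interleave {δ τ : Finset (Finset (Fin n))} {D : Finset (Fin (2 * n))} :
    D ∈ interleave n δ τ ↔
      (∃ B ∈ δ, B.image (ueEmb n) = D) ∨ ∃ C ∈ τ, C.image (beEmb n) = D := by
  simp [interleave]

variable {δ τ : Finset (Finset (Fin n))}

theorem linked_interleave {x y : Fin (2 * n)} :
    Linked (interleave n δ τ) x y ↔
      (∃ a b, ueEmb n a = x ∧ ueEmb n b = y ∧ Linked δ a b) ∨
        ∃ a b, beEmb n a = x ∧ beEmb n b = y ∧ Linked τ a b := by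
  constructor
  · rintro ⟨D, hD, hx, hy⟩
    rcases mem_interleave.mp hD with ⟨B, hB, rfl⟩ | ⟨C, hC, rfl⟩
    · obtain ⟨a, ha, rfl⟩ := Finset.mem_image.mp hx
      obtain ⟨b, hb, rfl⟩ := Finset.mem_image.mp hy
      exact .inl ⟨a, b, rfl, rfl, B, hB, ha, hb⟩
    · obtain ⟨a, ha, rfl⟩ := Finset.mem_image.mp hx
      obtain ⟨b, hb, rfl⟩ := Finset.mem_image.mp hy
      exact .inr ⟨a, b, rfl, rfl, C, hC, ha, hb⟩
  · rintro (⟨a, b, rfl, rfl, B, hB, ha, hb⟩ | ⟨a, b, rfl, rfl, C, hC, ha, hb⟩)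
    · exact ⟨_, mem_interleave.mpr (.inl ⟨B, hB, rfl⟩), Finset.mem_image_of_mem _ ha,
        Finset.mem_image_of_mem _ hb⟩
    · exact ⟨_, mem_interleave.mpr (.inr ⟨C, hC, rfl⟩), Finset.mem_image_of_mem _ ha,
        Finset.mem_image_of_mem _ hb⟩

@[simp] theorem linked_interleave_ueEmb {a b : Fin n} :
    Linked (interleave n δ τ) (ueEmb n a) (ueEmb n b) ↔ Linked δ a b := by
  simp [linked_interleave]

@[simp] theorem linked_interleave_beEmb {a b : Fin n} :
    Linked (interleave n δ τ) (beEmb n a) (beEmb n b) ↔ Linked τ a b := by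
  simp [linked_interleave]

@[simp] theorem not_linked_interleave_ueEmb_beEmb (a b : Fin n) :
    ¬ Linked (interleave n δ τ) (ueEmb n a) (beEmb n b) := by
  simp [linked_interleave]

@[simp] theorem not_linked_interleave_beEmb_ueEmb (a b : Fin n) :
    ¬ Linked (interleave n δ τ) (beEmb n a) (ueEmb n b) := by
  simp [linked_interleave]

end Interleave

section InterleaveNC

variable {n : ℕ} {δ τ : Finset (Finset (Fin n))}

theorem IsPart.of_image {k : ℕ} {f : Fin k → Fin n} (hf : Function.Injective f)
    {π : Finset (Finset (Fin n))} {σ : Finset (Finset (Fin k))} (hπ : IsPart n π)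
    (himage : ∀ B ∈ σ, B.image f ∈ π) (hcov : ∀ x, ∃ B ∈ σ, x ∈ B) : IsPart k σ := by
  refine ⟨fun B hB => Finset.image_nonempty.mp (hπ.1 _ (himage B hB)), hcov,
    fun B hB C hC hBC => ?_⟩
  rw [← Finset.disjoint_image hf]
  exact hπ.2.2 _ (himage B hB) _ (himage C hC) fun h => hBC (Finset.image_injective hf h)

theorem isPart_interleave_iff :
    IsPart (2 * n) (interleave n δ τ) ↔ IsPart n δ ∧ IsPart n τ := by
  constructor
  · intro h
    refine ⟨.of_image ueEmb_strictMono.injective h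
        (fun B hB => mem_interleave.mpr (.inl ⟨B, hB, rfl⟩)) fun x => ?_,
      .of_image beEmb_strictMono.injective h
        (fun C hC => mem_interleave.mpr (.inr ⟨C, hC, rfl⟩)) fun x => ?_⟩
    · obtain ⟨B, hB, hx, -⟩ := linked_interleave_ueEmb.mp (h.linked_equivalence.refl (ueEmb n x))
      exact ⟨B, hB, hx⟩
    · obtain ⟨C, hC, hx, -⟩ := linked_interleave_beEmb.mp (h.linked_equivalence.refl (beEmb n x))
      exact ⟨C, hC, hx⟩
  · rintro ⟨hδ, hτ⟩
    refine ⟨?_, fun z => ?_, ?_⟩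
    · rintro D hD
      rcases mem_interleave.mp hD with ⟨B, hB, rfl⟩ | ⟨C, hC, rfl⟩
      exacts [(hδ.1 B hB).image _, (hτ.1 C hC).image _]
    · rcases Nat.mod_two_eq_zero_or_one z with hz | hz
      · obtain ⟨B, hB, hzB⟩ := hδ.2.1 (halfEmb n z)
        exact ⟨_, mem_interleave.mpr (.inl ⟨B, hB, rfl⟩),
          Finset.mem_image.mpr ⟨_, hzB, ueEmb_halfEmb hz⟩⟩
      · obtain ⟨C, hC, hzC⟩ := hτ.2.1 (halfEmb n z)
        exact ⟨_, mem_interleave.mpr (.inr ⟨C, hC, rfl⟩),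
          Finset.mem_image.mpr ⟨_, hzC, beEmb_halfEmb hz⟩⟩
    · rintro D hD E hE hDE
      rcases mem_interleave.mp hD with ⟨B, hB, rfl⟩ | ⟨B, hB, rfl⟩ <;>
        rcases mem_interleave.mp hE with ⟨C, hC, rfl⟩ | ⟨C, hC, rfl⟩
      · exact (Finset.disjoint_image ueEmb_strictMono.injective).mpr
          (hδ.2.2 B hB C hC (by rintro rfl; exact hDE rfl))
      · simp [Finset.disjoint_left]
      · simp [Finset.disjoint_left]
      · exact (Finset.disjoint_image beEmb_strictMono.injective).mpr
          (hτ.2.2 B hB C hC (by rintro rfl; exact hDE rfl))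

theorem noncrossing_interleave (hδ : Noncrossing (Linked δ)) (hτ : Noncrossing (Linked τ))
    (hcompat : ∀ a b, Linked τ a b → KrewerasRel δ a b) :
    Noncrossing (Linked (interleave n δ τ)) := by
  intro i k p q hik hkp hpq hip hkq
  rw [linked_interleave] at hip hkq
  rcases hip with ⟨a, c, rfl, rfl, hac⟩ | ⟨a, c, rfl, rfl, hac⟩ <;>
    rcases hkq with ⟨b, d, rfl, rfl, hbd⟩ | ⟨b, d, rfl, rfl, hbd⟩
  · simp only [ueEmb_strictMono.lt_iff_lt] at hik hkp hpq
    exact linked_interleave_ueEmb.mpr (hδ hik hkp hpq hac hbd)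
  · have := hcompat b d hbd a c hac
    simp only [ueEmb_lt_beEmb, beEmb_lt_ueEmb, Set.mem_uIoc] at this hik hkp hpq
    omega
  · have := hcompat a c hac b d hbd
    simp only [ueEmb_lt_beEmb, beEmb_lt_ueEmb, Set.mem_uIoc] at this hik hkp hpq
    omega
  · simp only [beEmb_strictMono.lt_iff_lt] at hik hkp hpq
    exact linked_interleave_beEmb.mpr (hτ hik hkp hpq hac hbd)

theorem krewerasRel_of_noncrossing_interleave (h : Noncrossing (Linked (interleave n δ τ)))
    {a b : Fin n} (hab : Linked τ a b) : KrewerasRel δ a b := by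
  have separated : ∀ a b x y, Linked τ a b → Linked δ x y → a < x → x ≤ b → a < y := by
    intro a b x y hab hxy hax hxb
    by_contra hya
    exact not_linked_interleave_ueEmb_beEmb y a <| h (ueEmb_lt_beEmb.mpr (not_lt.mp hya))
      (beEmb_lt_ueEmb.mpr hax) (ueEmb_lt_beEmb.mpr hxb)
      (linked_interleave_ueEmb.mpr hxy.symm) (linked_interleave_beEmb.mpr hab)
  have inside : ∀ a b x y, Linked τ a b → Linked δ x y → a < x → x ≤ b → y ≤ b := by
    intro a b x y hab hxy hax hxb
    by_contra hby
    exact not_linked_interleave_beEmb_ueEmb a x <| h (beEmb_lt_ueEmb.mpr hax)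
      (ueEmb_lt_beEmb.mpr hxb) (beEmb_lt_ueEmb.mpr (not_le.mp hby))
      (linked_interleave_beEmb.mpr hab) (linked_interleave_ueEmb.mpr hxy)
  have mem : ∀ x y, Linked δ x y → x ∈ Set.uIoc a b → y ∈ Set.uIoc a b := by
    intro x y hxy hx
    rw [Set.mem_uIoc] at hx ⊢
    rcases hx with ⟨hax, hxb⟩ | ⟨hbx, hxa⟩
    · exact .inl ⟨separated a b x y hab hxy hax hxb, inside a b x y hab hxy hax hxb⟩
    · exact .inr ⟨separated b a x y hab.symm hxy hbx hxa, inside b a x y hab.symm hxy hbx hxa⟩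
  exact fun x y hxy => ⟨mem x y hxy, mem y x hxy.symm⟩

theorem isNC_interleave_iff :
    IsNC (2 * n) (interleave n δ τ) ↔
      IsNC n δ ∧ IsNC n τ ∧ ∀ a b, Linked τ a b → KrewerasRel δ a b := by
  have hue : Function.onFun (Linked (interleave n δ τ)) (ueEmb n) = Linked δ := by
    ext a b
    exact linked_interleave_ueEmb
  have hbe : Function.onFun (Linked (interleave n δ τ)) (beEmb n) = Linked τ := by
    ext a b
    exact linked_interleave_beEmb
  simp only [isNC_iff, isPart_interleave_iff]
  constructor
  · rintro ⟨⟨hδ, hτ⟩, h⟩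
    exact ⟨⟨hδ, hue ▸ h.comap ueEmb_strictMono⟩, ⟨hτ, hbe ▸ h.comap beEmb_strictMono⟩,
      fun a b => krewerasRel_of_noncrossing_interleave h⟩
  · rintro ⟨⟨hδ, hδnc⟩, ⟨hτ, hτnc⟩, hcompat⟩
    exact ⟨⟨hδ, hτ⟩, noncrossing_interleave hδnc hτnc hcompat⟩

theorem isKr_kreweras (hδ : IsNC n δ) : IsKr n δ (kreweras n δ) := by
  refine ⟨isNC_kreweras, isNC_interleave_iff.mpr ⟨hδ, isNC_kreweras,
    fun a b => linked_kreweras.mp⟩, fun τ hτ hint => ?_⟩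
  exact (hτ.isPart.refines_iff isNC_kreweras.isPart).mpr fun a b hab =>
    linked_kreweras.mpr ((isNC_interleave_iff.mp hint).2.2 a b hab)

theorem IsKr.eq_kreweras (h : IsKr n δ τ) : τ = kreweras n δ := by
  have hk := isKr_kreweras (isNC_interleave_iff.mp h.2.1).1
  exact h.1.isPart.eq_of_refines hk.1.isPart (hk.2.2 τ h.1 h.2.1) (h.2.2 _ hk.1 hk.2.1)

end InterleaveNC

section ParitySplit

variable {n : ℕ}

theorem image_halfEmb_image_ueEmb (B : Finset (Fin n)) :
    (B.image (ueEmb n)).image (halfEmb n) = B := by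
  simp [Finset.image_image, Function.comp_def]

theorem image_halfEmb_image_beEmb (B : Finset (Fin n)) :
    (B.image (beEmb n)).image (halfEmb n) = B := by
  simp [Finset.image_image, Function.comp_def]

theorem image_ueEmb_image_halfEmb {B : Finset (Fin (2 * n))} (hB : ∀ i ∈ B, i.1 % 2 = 0) :
    (B.image (halfEmb n)).image (ueEmb n) = B := by
  rw [Finset.image_image]
  exact (Finset.image_congr fun z hz => ueEmb_halfEmb (hB z hz)).trans Finset.image_id

theorem image_beEmb_image_halfEmb {B : Finset (Fin (2 * n))} (hB : ∀ i ∈ B, i.1 % 2 = 1) :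
    (B.image (halfEmb n)).image (beEmb n) = B := by
  rw [Finset.image_image]
  exact (Finset.image_congr fun z hz => beEmb_halfEmb (hB z hz)).trans Finset.image_id

theorem minusPart_interleave {δ τ : Finset (Finset (Fin n))} (hτ : ∀ C ∈ τ, C.Nonempty) :
    minusPart n (interleave n δ τ) = δ := by
  ext B
  simp only [minusPart, Finset.mem_image, Finset.mem_filter, mem_interleave]
  constructor
  · rintro ⟨_, ⟨⟨B', hB', rfl⟩ | ⟨C, hC, rfl⟩, heven⟩, rfl⟩
    · rwa [image_halfEmb_image_ueEmb]
    · obtain ⟨x, hx⟩ := hτ C hC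
      have := heven _ (Finset.mem_image_of_mem (beEmb n) hx)
      simp [beEmb] at this
  · intro hB
    refine ⟨_, ⟨.inl ⟨B, hB, rfl⟩, fun i hi => ?_⟩, image_halfEmb_image_ueEmb B⟩
    obtain ⟨a, -, rfl⟩ := Finset.mem_image.mp hi
    simp [ueEmb]

theorem plusPart_interleave {δ τ : Finset (Finset (Fin n))} (hδ : ∀ B ∈ δ, B.Nonempty) :
    plusPart n (interleave n δ τ) = τ := by
  ext C
  simp only [plusPart, Finset.mem_image, Finset.mem_filter, mem_interleave]
  constructor
  · rintro ⟨_, ⟨⟨B, hB, rfl⟩ | ⟨C', hC', rfl⟩, hodd⟩, rfl⟩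
    · obtain ⟨x, hx⟩ := hδ B hB
      have := hodd _ (Finset.mem_image_of_mem (ueEmb n) hx)
      simp [ueEmb] at this
    · rwa [image_halfEmb_image_beEmb]
  · intro hC
    refine ⟨_, ⟨.inr ⟨C, hC, rfl⟩, fun i hi => ?_⟩, image_halfEmb_image_beEmb C⟩
    obtain ⟨a, -, rfl⟩ := Finset.mem_image.mp hi
    simp [beEmb]

theorem interleave_minusPart_plusPart {γ : Finset (Finset (Fin (2 * n)))}
    (hγ : ∀ B ∈ γ, (∀ i ∈ B, i.1 % 2 = 0) ∨ (∀ i ∈ B, i.1 % 2 = 1)) :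
    interleave n (minusPart n γ) (plusPart n γ) = γ := by
  ext D
  simp only [mem_interleave, minusPart, plusPart, Finset.mem_image, Finset.mem_filter]
  constructor
  · rintro (⟨_, ⟨B, ⟨hB, heven⟩, rfl⟩, rfl⟩ | ⟨_, ⟨B, ⟨hB, hodd⟩, rfl⟩, rfl⟩)
    · rwa [image_ueEmb_image_halfEmb heven]
    · rwa [image_beEmb_image_halfEmb hodd]
  · intro hD
    rcases hγ D hD with heven | hodd
    · exact .inl ⟨_, ⟨D, ⟨hD, heven⟩, rfl⟩, image_ueEmb_image_halfEmb heven⟩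
    · exact .inr ⟨_, ⟨D, ⟨hD, hodd⟩, rfl⟩, image_beEmb_image_halfEmb hodd⟩

end ParitySplit

section NCs

variable {n : ℕ} {γ : Finset (Finset (Fin (2 * n)))}

theorem NCs.isNC_minusPart (h : NCs n γ) : IsNC n (minusPart n γ) :=
  (isNC_interleave_iff.mp h.2.2.2.1).1

theorem NCs.eq_interleave_kreweras (h : NCs n γ) :
    interleave n (minusPart n γ) (kreweras n (minusPart n γ)) = γ := by
  rw [← h.2.2.eq_kreweras, interleave_minusPart_plusPart h.2.1]

theorem ncs_interleave_kreweras {δ : Finset (Finset (Fin n))} (hδ : IsNC n δ) :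
    NCs n (interleave n δ (kreweras n δ)) := by
  refine ⟨(isKr_kreweras hδ).2.1, fun D hD => ?_, ?_⟩
  · rcases mem_interleave.mp hD with ⟨B, -, rfl⟩ | ⟨C, -, rfl⟩
    · exact .inl fun i hi => by
        obtain ⟨a, -, rfl⟩ := Finset.mem_image.mp hi
        simp [ueEmb]
    · exact .inr fun i hi => by
        obtain ⟨a, -, rfl⟩ := Finset.mem_image.mp hi
        simp [beEmb]
  · rw [minusPart_interleave isNC_kreweras.isPart.1, plusPart_interleave hδ.isPart.1]
    exact isKr_kreweras hδ

noncomputable def ncsEquivNCPart (n : ℕ) :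
    {γ : Finset (Finset (Fin (2 * n))) // NCs n γ} ≃ NCPart n where
  toFun γ := ⟨minusPart n γ.1, γ.2.isNC_minusPart⟩
  invFun δ := ⟨interleave n δ.1 (kreweras n δ.1), ncs_interleave_kreweras δ.2⟩
  left_inv γ := Subtype.ext γ.2.eq_interleave_kreweras
  right_inv _ := Subtype.ext (minusPart_interleave isNC_kreweras.isPart.1)

end NCs

/-- `NC_s(2n)` has the same cardinality as `NC(n)`, namely the Catalan number
`C_n = (1/(n+1)) · binom(2n, n)`. -/
theorem card_ncs (n : ℕ) :
    Nat.card {γ : Finset (Finset (Fin (2 * n))) // NCs n γ} =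
      Nat.card {γ : Finset (Finset (Fin n)) // IsNC n γ} ∧
    Nat.card {γ : Finset (Finset (Fin (2 * n))) // NCs n γ} = catalan n ∧
    (n + 1) * catalan n = (2 * n).choose n := by
  have hcard := Nat.card_congr (ncsEquivNCPart n)
  exact ⟨hcard, hcard.trans (card_ncPart n), succ_mul_catalan_eq_centralBinom n⟩
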